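/- For pairwise orthogonal imaginary octonions p, q, r (⟨p,q⟩ = ⟨p,r⟩ = ⟨q,r⟩ = 0), one has [[ad_{X_q}, ad_{X_p}], [ad_{X_p}, ad_{X_r}]] = −4·N(p)·[ad_{X_q}, ad_{X_r}] as operators on V (the paper's relation [D_{q,p}, D_{p,r}] = −2D_{q,r} when N(p) = 1). -/

import Mathlib

noncomputable section

abbrev H := Quaternion ℝ

/-- The octonions 𝕆, as the Cayley–Dickson double of the quaternions:
pairs (a,b) of quaternions. -/
def Oct : Type := H × H

namespace Oct

instance : AddCommGroup Oct := inferInstanceAs (AddCommGroup (H × H))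
instance : Module ℝ Oct := inferInstanceAs (Module ℝ (H × H))

def mk' (a b : H) : Oct := (a, b)
def fst : Oct → H := Prod.fst
def snd : Oct → H := Prod.snd

/-- Cayley–Dickson multiplication: (a,b)·(c,d) = (ac − conj(d)b, da + b·conj(c)). -/
instance : Mul Oct :=
  ⟨fun p q => mk' (p.fst * q.fst - star q.snd * p.snd) (q.snd * p.fst + p.snd * star q.fst)⟩

instance : One Oct := ⟨mk' 1 0⟩

/-- Octonionic conjugation: conj (a,b) = (conj a, −b). -/
def conj (p : Oct) : Oct := mk' (star p.fst) (-p.snd)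

/-- The real part of an octonion, as a real scalar. -/
def re (p : Oct) : ℝ := (p.fst).re

/-- The bilinear form ⟨x,y⟩ = (x·conj(y) + y·conj(x))/2, a real scalar. -/
def oinner (p q : Oct) : ℝ := re (p * conj q + q * conj p) / 2

/-- The norm N(x) = x·conj(x), a real scalar. -/
def N (p : Oct) : ℝ := re (p * conj p)

/-- An octonion is imaginary if conj x = −x. -/
def IsIm (p : Oct) : Prop := conj p = -p

/-- The embedding of the reals into the octonions. -/
def oR (r : ℝ) : Oct := mk' (algebraMap ℝ H r) 0

end Oct

open Oct

abbrev M2 := Matrix (Fin 2) (Fin 2) Oct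

/-- The traceless Hermitian 2×2 matrix P(z,a) = !![z, a; conj a, −z]. -/
def Pm (z : ℝ) (a : Oct) : M2 := !![oR z, a; conj a, -oR z]

/-- The off-diagonal anti-Hermitian generator X_q = !![0, q; −conj q, 0]. -/
def Xm (q : Oct) : M2 := !![0, q; -conj q, 0]

/-- The diagonal generator D_q = !![q, 0; 0, −q]. -/
def Dm (q : Oct) : M2 := !![q, 0; 0, -q]

/-- The adjoint action ad_A : P ↦ AP − PA (entrywise octonion multiplication). -/
def ad (A : M2) : M2 → M2 := fun P => A * P - P * A

/-- The bracket of operators, [S,T] = S∘T − T∘S. -/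
def br (S T : M2 → M2) : M2 → M2 := fun P => S (T P) - T (S P)

/-!
For every octonion `x`, `ad_{X_x}` maps `P(z, a)` to `P(2⟨x, a⟩, -2z·x)`: this only uses the
polarization identities `x·conj a + a·conj x = conj x·a + conj a·x = 2⟨x, a⟩`, which hold in any
Cayley–Dickson double. Hence `[ad_{X_x}, ad_{X_y}]` kills the `z`-coordinate and acts on `a` as
`4·(x ∧ y)`, where `(x ∧ y) a = ⟨x, a⟩ y - ⟨y, a⟩ x` is the infinitesimal rotation in the plane of
`x` and `y`. The theorem thus reduces to the commutation relation
`[q ∧ p, p ∧ r] = ⟨q, p⟩ p ∧ r + ⟨p, r⟩ q ∧ p - N(p) q ∧ r` of `𝔰𝔬(𝕆, ⟨·,·⟩)`.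
-/

namespace LinearMap.BilinForm

variable {R M : Type*} [CommRing R] [AddCommGroup M] [Module R M]

def wedge (B : LinearMap.BilinForm R M) (x y : M) : Module.End R M :=
  (B x).smulRight y - (B y).smulRight x

@[simp] lemma wedge_apply (B : LinearMap.BilinForm R M) (x y a : M) :
    B.wedge x y a = B x a • y - B y a • x := rfl

lemma wedge_lie_wedge {B : LinearMap.BilinForm R M} (hB : B.IsSymm) (p q r : M) :
    ⁅B.wedge q p, B.wedge p r⁆
      = B q p • B.wedge p r + B p r • B.wedge q p - B p p • B.wedge q r := by
  ext a
  simp only [LieRing.of_associative_ring_bracket, LinearMap.sub_apply, LinearMap.add_apply,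
    LinearMap.smul_apply, Module.End.mul_apply, wedge_apply, map_sub, map_smul,
    hB.eq q r, hB.eq p q, hB.eq r p]
  module

end LinearMap.BilinForm

namespace Oct

@[simp] lemma mul_fst (x y : Oct) : (x * y).1 = x.1 * y.1 - star y.2 * x.2 := rfl
@[simp] lemma mul_snd (x y : Oct) : (x * y).2 = y.2 * x.1 + x.2 * star y.1 := rfl
@[simp] lemma conj_fst (x : Oct) : (conj x).1 = star x.1 := rfl
@[simp] lemma conj_snd (x : Oct) : (conj x).2 = -x.2 := rfl
@[simp] lemma add_fst (x y : Oct) : (x + y).1 = x.1 + y.1 := rfl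
@[simp] lemma add_snd (x y : Oct) : (x + y).2 = x.2 + y.2 := rfl
@[simp] lemma neg_fst (x : Oct) : (-x).1 = -x.1 := rfl
@[simp] lemma neg_snd (x : Oct) : (-x).2 = -x.2 := rfl
@[simp] lemma sub_fst (x y : Oct) : (x - y).1 = x.1 - y.1 := rfl
@[simp] lemma sub_snd (x y : Oct) : (x - y).2 = x.2 - y.2 := rfl
@[simp] lemma smul_fst (c : ℝ) (x : Oct) : (c • x).1 = c • x.1 := rfl
@[simp] lemma smul_snd (c : ℝ) (x : Oct) : (c • x).2 = c • x.2 := rfl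
@[simp] lemma zero_fst : (0 : Oct).1 = 0 := rfl
@[simp] lemma zero_snd : (0 : Oct).2 = 0 := rfl
@[simp] lemma oR_fst (c : ℝ) : (oR c).1 = c := rfl
@[simp] lemma oR_snd (c : ℝ) : (oR c).2 = 0 := rfl

lemma ext {x y : Oct} (h₁ : x.1 = y.1) (h₂ : x.2 = y.2) : x = y := Prod.ext h₁ h₂

lemma zero_mul (x : Oct) : 0 * x = 0 := ext (by simp) (by simp)
lemma mul_zero (x : Oct) : x * 0 = 0 := ext (by simp) (by simp)
lemma neg_mul (x y : Oct) : -x * y = -(x * y) := ext (by simp; abel) (by simp; abel)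
lemma mul_neg (x y : Oct) : x * -y = -(x * y) := ext (by simp; abel) (by simp; abel)

lemma mul_oR (x : Oct) (c : ℝ) : x * oR c = c • x :=
  ext (by simp [Quaternion.mul_coe_eq_smul]) (by simp [Quaternion.mul_coe_eq_smul])

lemma oR_mul (c : ℝ) (x : Oct) : oR c * x = c • x :=
  ext (by simp [Quaternion.coe_mul_eq_smul]) (by simp [Quaternion.mul_coe_eq_smul])

lemma conj_neg (x : Oct) : conj (-x) = -conj x := ext (by simp) (by simp)
lemma conj_smul (c : ℝ) (x : Oct) : conj (c • x) = c • conj x := ext (by simp) (by simp)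

lemma oinner_eq (x y : Oct) : oinner x y =
    x.1.re * y.1.re + x.1.imI * y.1.imI + x.1.imJ * y.1.imJ + x.1.imK * y.1.imK
    + x.2.re * y.2.re + x.2.imI * y.2.imI + x.2.imJ * y.2.imJ + x.2.imK * y.2.imK := by
  simp [oinner, Oct.re, fst, Quaternion.re_mul]
  ring

lemma oinner_self (x : Oct) : oinner x x = N x := by
  simp [oinner_eq, N, Oct.re, fst, Quaternion.re_mul]
  ring

lemma mul_conj_add_mul_conj (x y : Oct) : x * conj y + y * conj x = oR (2 * oinner x y) := by
  refine ext ?_ (by simp)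
  ext <;> simp [oinner_eq] <;> ring

lemma conj_mul_add_conj_mul (x y : Oct) : conj x * y + conj y * x = oR (2 * oinner x y) := by
  refine ext ?_ (by simp)
  ext <;> simp [oinner_eq] <;> ring

def oinnerForm : LinearMap.BilinForm ℝ Oct :=
  LinearMap.mk₂ ℝ oinner
    (fun _ _ _ => by simp [oinner_eq]; ring) (fun _ _ _ => by simp [oinner_eq]; ring)
    (fun _ _ _ => by simp [oinner_eq]; ring) (fun _ _ _ => by simp [oinner_eq]; ring)

@[simp] lemma oinnerForm_apply (x y : Oct) : oinnerForm x y = oinner x y := rfl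

lemma oinnerForm_isSymm : oinnerForm.IsSymm := ⟨fun x y => by simp [oinner_eq]; ring⟩

end Oct

lemma Pm_sub_Pm (z w : ℝ) (a b : Oct) : Pm z a - Pm w b = Pm (z - w) (a - b) := by
  ext i j
  fin_cases i <;> fin_cases j <;> refine ext ?_ ?_ <;> simp [Pm] <;> abel

lemma smul_Pm (c z : ℝ) (a : Oct) : c • Pm z a = Pm (c * z) (c • a) := by
  ext i j
  fin_cases i <;> fin_cases j <;> refine ext ?_ ?_ <;>
    simp [Pm, Quaternion.coe_mul, Quaternion.coe_mul_eq_smul]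

lemma br_apply (S T : M2 → M2) (P : M2) : br S T P = S (T P) - T (S P) := rfl

lemma ad_Xm_Pm (x : Oct) (z : ℝ) (a : Oct) :
    ad (Xm x) (Pm z a) = Pm (2 * oinner x a) ((-2 * z) • x) := by
  ext i j
  fin_cases i <;> fin_cases j <;>
    simp only [ad, Xm, Pm, Fin.zero_eta, Fin.isValue, Fin.mk_one, Matrix.sub_apply,
      Matrix.mul_apply, Matrix.of_apply, Matrix.cons_val', Matrix.cons_val_fin_one,
      Matrix.cons_val_zero, Matrix.cons_val_one, Fin.sum_univ_two, Oct.zero_mul, Oct.mul_zero,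
      Oct.neg_mul, Oct.mul_neg, mul_oR, oR_mul, conj_neg, conj_smul, smul_zero, smul_neg,
      zero_add, add_zero, neg_zero, neg_neg, sub_neg_eq_add, _root_.neg_mul, neg_smul]
  · exact mul_conj_add_mul_conj x a
  · module
  · module
  · rw [← conj_mul_add_conj_mul, neg_add]
    abel

lemma br_ad_Xm_Pm (x y : Oct) (z : ℝ) (a : Oct) :
    br (ad (Xm x)) (ad (Xm y)) (Pm z a) = Pm 0 ((4 : ℝ) • oinnerForm.wedge x y a) := by
  rw [br_apply, ad_Xm_Pm, ad_Xm_Pm, ad_Xm_Pm, ad_Xm_Pm, Pm_sub_Pm]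
  congr 1
  · simp [oinner_eq]
    ring
  · simp only [LinearMap.BilinForm.wedge_apply, oinnerForm_apply]
    module

theorem bracket_Dqp_Dpr_general (p q r : Oct) (hpq : oinner p q = 0) (hpr : oinner p r = 0) :
    ∀ (z : ℝ) (a : Oct),
      br (br (ad (Xm q)) (ad (Xm p))) (br (ad (Xm p)) (ad (Xm r))) (Pm z a)
        = ((-4) * N p) • br (ad (Xm q)) (ad (Xm r)) (Pm z a) := by
  intro z a
  have hqp : oinnerForm q p = 0 := by rw [oinnerForm_isSymm.eq]; exact hpq
  have hwedge : ⁅oinnerForm.wedge q p, oinnerForm.wedge p r⁆ = -N p • oinnerForm.wedge q r := by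
    rw [LinearMap.BilinForm.wedge_lie_wedge oinnerForm_isSymm, hqp, oinnerForm_apply, hpr,
      oinnerForm_apply, oinner_self]
    simp
  have hwedge_a := LinearMap.congr_fun hwedge a
  simp only [LieRing.of_associative_ring_bracket, LinearMap.sub_apply, Module.End.mul_apply,
    LinearMap.smul_apply] at hwedge_a
  rw [br_apply, br_ad_Xm_Pm p r, br_ad_Xm_Pm q p, br_ad_Xm_Pm q p, br_ad_Xm_Pm p r,
    br_ad_Xm_Pm q r, Pm_sub_Pm, smul_Pm]
  congr 1
  · ring
  · simp only [map_smul]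
    linear_combination (norm := module) (16 : ℝ) • hwedge_a

/-- For pairwise orthogonal imaginary octonions p, q, r:
[[ad_{X_q}, ad_{X_p}], [ad_{X_p}, ad_{X_r}]] = −4·N(p)·[ad_{X_q}, ad_{X_r}]
as operators on V (the relation [D_{q,p}, D_{p,r}] = −2D_{q,r} when N(p) = 1). -/
theorem bracket_Dqp_Dpr (p q r : Oct) (hp : IsIm p) (hq : IsIm q) (hr : IsIm r)
    (hpq : oinner p q = 0) (hpr : oinner p r = 0) (hqr : oinner q r = 0) :
    ∀ (z : ℝ) (a : Oct),
      br (br (ad (Xm q)) (ad (Xm p))) (br (ad (Xm p)) (ad (Xm r))) (Pm z a)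
        = ((-4) * N p) • br (ad (Xm q)) (ad (Xm r)) (Pm z a) :=
  bracket_Dqp_Dpr_general p q r hpq hpr
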